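/- Uniqueness part of quantitative Radon's theorem: For any d ≥ 1 and d+2 points in ℝ^d in general position, if I₁ ⊔ J₁ and I₂ ⊔ J₂ are both partitions of the index set such that the corresponding convex hulls intersect, then {I₁, J₁} = {I₂, J₂} (the partitions coincide up to swapping the two parts). -/

import Mathlib

/-!
In general position the affine dependences `c` of the `d + 2` points (`∑ cᵢ = 0`,
`∑ cᵢ • pᵢ = 0`) form a line: a dependence vanishing at one index is a dependence of the other
`d + 1` points, which are affinely independent, so it is zero. Hence a nonzero dependence has no
zero coordinate and any two dependences are proportional. A point in both hulls of a partition
`I ⊔ J` gives, as the difference of its barycentric weights with respect to `I` and to `J`, a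
nonzero dependence that is positive exactly on `I` and negative exactly on `J`. Proportional
dependences have equal or opposite sign patterns, so two such partitions agree up to swapping.
-/

open Finset

section AffineDependences

variable {k V ι : Type*} [Field k] [AddCommGroup V] [Module k V] [Fintype ι]

def affineDependences (p : ι → V) : Submodule k (ι → k) where
  carrier := {c | ∑ i, c i = 0 ∧ ∑ i, c i • p i = 0}
  add_mem' hc hc' := by
    simp_all [Finset.sum_add_distrib, add_smul]
  zero_mem' := by simp
  smul_mem' a c hc := by
    simp_all [← Finset.mul_sum, mul_smul, ← Finset.smul_sum]

theorem mem_affineDependences {p : ι → V} {c : ι → k} :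
    c ∈ affineDependences p ↔ ∑ i, c i = 0 ∧ ∑ i, c i • p i = 0 :=
  Iff.rfl

theorem AffineIndependent.eq_zero_of_mem_affineDependences {p : ι → V} {s : Finset ι}
    (hs : AffineIndependent k fun i : s => p i) {c : ι → k} (hc : c ∈ affineDependences p)
    (hsupp : ∀ i ∉ s, c i = 0) : c = 0 := by
  obtain ⟨hsum, hcomb⟩ := hc
  have hsum' : ∑ i : s, c i = 0 := by
    rw [Finset.sum_coe_sort s c, ← hsum]
    exact Finset.sum_subset (Finset.subset_univ s) fun i _ hi => hsupp i hi
  have hcomb' : ∑ i : s, c i • p i = 0 := by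
    rw [Finset.sum_coe_sort s (fun i => c i • p i), ← hcomb]
    exact Finset.sum_subset (Finset.subset_univ s) fun i _ hi => by simp [hsupp i hi]
  have hzero := hs.eq_zero_of_sum_eq_zero hsum' hcomb'
  funext i
  by_cases hi : i ∈ s
  · exact hzero ⟨i, hi⟩ (Finset.mem_univ _)
  · exact hsupp i hi

variable [DecidableEq ι] {p : ι → V}

theorem apply_ne_zero_of_mem_affineDependences
    (hgen : ∀ i, AffineIndependent k fun j : (univ.erase i : Finset ι) => p j)
    {c : ι → k} (hc : c ∈ affineDependences p) (hc0 : c ≠ 0) (i : ι) : c i ≠ 0 := fun hci =>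
  hc0 <| (hgen i).eq_zero_of_mem_affineDependences hc fun j hj => by
    obtain rfl : j = i := by simpa using hj
    exact hci

theorem exists_eq_smul_of_mem_affineDependences
    (hgen : ∀ i, AffineIndependent k fun j : (univ.erase i : Finset ι) => p j)
    {c₁ c₂ : ι → k} (hc₁ : c₁ ∈ affineDependences p) (hc₂ : c₂ ∈ affineDependences p)
    (hc₂0 : c₂ ≠ 0) : ∃ l : k, c₁ = l • c₂ := by
  obtain ⟨i, hi⟩ := Function.ne_iff.mp hc₂0
  refine ⟨c₁ i / c₂ i, sub_eq_zero.mp ?_⟩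
  refine (hgen i).eq_zero_of_mem_affineDependences
    (sub_mem hc₁ (Submodule.smul_mem _ _ hc₂)) fun j hj => ?_
  obtain rfl : j = i := by simpa using hj
  simp [div_mul_cancel₀ _ hi]

end AffineDependences

section Radon

variable {k V ι : Type*} [Field k] [LinearOrder k] [IsStrictOrderedRing k]
  [AddCommGroup V] [Module k V] [Fintype ι] {p : ι → V}

theorem exists_weights_of_mem_convexHull_image {I : Set ι} {x : V}
    (hx : x ∈ convexHull k (p '' I)) :
    ∃ a : ι → k, (∀ i, 0 ≤ a i) ∧ (∀ i ∉ I, a i = 0) ∧ ∑ i, a i = 1 ∧ ∑ i, a i • p i = x := by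
  classical
  refine convexHull_min (t := {x | ∃ a : ι → k, (∀ i, 0 ≤ a i) ∧ (∀ i ∉ I, a i = 0) ∧
    ∑ i, a i = 1 ∧ ∑ i, a i • p i = x}) ?_ ?_ hx
  · rintro _ ⟨i, hi, rfl⟩
    refine ⟨Pi.single i 1, fun j => ?_, fun j hj => ?_, by simp, by simp⟩
    · by_cases h : j = i <;> simp [h]
    · simp [show j ≠ i by rintro rfl; exact hj hi]
  · rintro _ ⟨a, ha0, haI, ha1, rfl⟩ _ ⟨b, hb0, hbI, hb1, rfl⟩ s t hs ht hst
    refine ⟨s • a + t • b, fun i => ?_, fun i hi => ?_, ?_, ?_⟩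
    · simp only [Pi.add_apply, Pi.smul_apply, smul_eq_mul]
      exact add_nonneg (mul_nonneg hs (ha0 i)) (mul_nonneg ht (hb0 i))
    · simp [haI i hi, hbI i hi]
    · simp [Finset.sum_add_distrib, ← Finset.mul_sum, ha1, hb1, hst]
    · simp [Finset.sum_add_distrib, add_smul, mul_smul, ← Finset.smul_sum]

theorem exists_mem_affineDependences_of_convexHull_inter_nonempty {I : Set ι}
    (hmeet : (convexHull k (p '' I) ∩ convexHull k (p '' Iᶜ)).Nonempty) :
    ∃ c : ι → k, c ∈ affineDependences p ∧ c ≠ 0 ∧ ∀ i, (i ∈ I → 0 ≤ c i) ∧ (i ∉ I → c i ≤ 0) := by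
  obtain ⟨x, hxI, hxJ⟩ := hmeet
  obtain ⟨a, ha0, haI, ha1, hax⟩ := exists_weights_of_mem_convexHull_image hxI
  obtain ⟨b, hb0, hbJ, hb1, hbx⟩ := exists_weights_of_mem_convexHull_image hxJ
  refine ⟨a - b, ?_, ?_, fun i => ⟨fun hi => ?_, fun hi => ?_⟩⟩
  · simp [mem_affineDependences, Finset.sum_sub_distrib, sub_smul, ha1, hb1, hax, hbx]
  · intro hab
    have ha_zero : ∀ i, a i = 0 := fun i => by
      by_cases hi : i ∈ I
      · rw [sub_eq_zero.mp hab, hbJ i (not_not.mpr hi)]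
      · exact haI i hi
    simp [ha_zero] at ha1
  · simpa [hbJ i (not_not.mpr hi)] using ha0 i
  · simpa [haI i hi] using hb0 i

variable [DecidableEq ι]

theorem exists_mem_affineDependences_forall_mem_iff_pos
    (hgen : ∀ i, AffineIndependent k fun j : (univ.erase i : Finset ι) => p j) {I : Set ι}
    (hmeet : (convexHull k (p '' I) ∩ convexHull k (p '' Iᶜ)).Nonempty) :
    ∃ c : ι → k, c ∈ affineDependences p ∧ c ≠ 0 ∧ ∀ i, i ∈ I ↔ 0 < c i := by
  obtain ⟨c, hc, hc0, hsign⟩ := exists_mem_affineDependences_of_convexHull_inter_nonempty hmeet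
  refine ⟨c, hc, hc0, fun i => ⟨fun hi => ?_, fun hpos => ?_⟩⟩
  · exact ((hsign i).1 hi).lt_of_ne' (apply_ne_zero_of_mem_affineDependences hgen hc hc0 i)
  · by_contra hi
    exact ((hsign i).2 hi).not_gt hpos

theorem eq_or_eq_compl_of_convexHull_inter_nonempty
    (hgen : ∀ i, AffineIndependent k fun j : (univ.erase i : Finset ι) => p j) {I₁ I₂ : Set ι}
    (h₁ : (convexHull k (p '' I₁) ∩ convexHull k (p '' I₁ᶜ)).Nonempty)
    (h₂ : (convexHull k (p '' I₂) ∩ convexHull k (p '' I₂ᶜ)).Nonempty) :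
    I₂ = I₁ ∨ I₂ = I₁ᶜ := by
  obtain ⟨c₁, hc₁, hc₁0, hI₁⟩ := exists_mem_affineDependences_forall_mem_iff_pos hgen h₁
  obtain ⟨c₂, hc₂, hc₂0, hI₂⟩ := exists_mem_affineDependences_forall_mem_iff_pos hgen h₂
  obtain ⟨l, rfl⟩ := exists_eq_smul_of_mem_affineDependences hgen hc₂ hc₁ hc₁0
  have hl : l ≠ 0 := by rintro rfl; exact hc₂0 (zero_smul k c₁)
  rcases hl.lt_or_gt with hneg | hpos
  · refine Or.inr (Set.ext fun i => ?_)
    have hci := apply_ne_zero_of_mem_affineDependences hgen hc₁ hc₁0 i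
    rw [hI₂, Set.mem_compl_iff, hI₁, not_lt, hci.le_iff_lt, Pi.smul_apply, smul_eq_mul]
    exact ⟨fun h => neg_of_mul_pos_right h hneg.le, mul_pos_of_neg_of_neg hneg⟩
  · refine Or.inl (Set.ext fun i => ?_)
    rw [hI₂, hI₁, Pi.smul_apply, smul_pos_iff_of_pos_left hpos]

end Radon

theorem quantitative_radon_uniqueness_general (d : ℕ)
    (p : Fin (d + 2) → (Fin d → ℝ))
    (hgen : ∀ s : Finset (Fin (d + 2)), s.card = d + 1 →
      AffineIndependent ℝ (fun i : s => p i))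
    (I₁ J₁ I₂ J₂ : Set (Fin (d + 2)))
    (h₁disj : I₁ ∩ J₁ = ∅) (h₁union : I₁ ∪ J₁ = Set.univ)
    (h₁meet : (convexHull ℝ (p '' I₁) ∩ convexHull ℝ (p '' J₁)).Nonempty)
    (h₂disj : I₂ ∩ J₂ = ∅) (h₂union : I₂ ∪ J₂ = Set.univ)
    (h₂meet : (convexHull ℝ (p '' I₂) ∩ convexHull ℝ (p '' J₂)).Nonempty) :
    ({I₁, J₁} : Set (Set (Fin (d + 2)))) = {I₂, J₂} := by
  obtain rfl : J₁ = I₁ᶜ := (IsCompl.of_eq h₁disj h₁union).compl_eq.symm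
  obtain rfl : J₂ = I₂ᶜ := (IsCompl.of_eq h₂disj h₂union).compl_eq.symm
  have hgen' (i : Fin (d + 2)) : AffineIndependent ℝ fun j : (univ.erase i : Finset _) => p j :=
    hgen _ (by simp)
  rcases eq_or_eq_compl_of_convexHull_inter_nonempty hgen' h₁meet h₂meet with rfl | rfl
  · rfl
  · rw [compl_compl, Set.pair_comm]

theorem quantitative_radon_uniqueness (d : ℕ) (hd : 1 ≤ d)
    (p : Fin (d + 2) → (Fin d → ℝ))
    (hgen : ∀ s : Finset (Fin (d + 2)), s.card = d + 1 →
      AffineIndependent ℝ (fun i : s => p i))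
    (I₁ J₁ I₂ J₂ : Set (Fin (d + 2)))
    (h₁disj : I₁ ∩ J₁ = ∅) (h₁union : I₁ ∪ J₁ = Set.univ)
    (h₁meet : (convexHull ℝ (p '' I₁) ∩ convexHull ℝ (p '' J₁)).Nonempty)
    (h₂disj : I₂ ∩ J₂ = ∅) (h₂union : I₂ ∪ J₂ = Set.univ)
    (h₂meet : (convexHull ℝ (p '' I₂) ∩ convexHull ℝ (p '' J₂)).Nonempty) :
    ({I₁, J₁} : Set (Set (Fin (d + 2)))) = {I₂, J₂} :=
  quantitative_radon_uniqueness_general d p hgen I₁ J₁ I₂ J₂ h₁disj h₁union h₁meet h₂disj h₂union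
    h₂meet
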